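/- arXiv:1107.0400 — 4 statements merged into one kernel-verified Lean document; each statement's English description precedes it below -/
import Mathlib

section
/- A signed graph Γ = (G, σ) is balanced (every cycle has positive sign) if and only if Γ is switching equivalent to (G, +), the signed graph on G with all edges positive. -/
open scoped Classical

noncomputable def sadj {V : Type*} [Fintype V] [DecidableEq V]
    (G : SimpleGraph V) (σ : V → V → ℝ) : Matrix V V ℝ :=
  fun u v => if G.Adj u v then σ u v else 0

noncomputable def nullity {V : Type*} [Fintype V] [DecidableEq V]
    (A : Matrix V V ℝ) : ℕ :=
  Module.finrank ℝ (LinearMap.ker (Matrix.mulVecLin A))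

def walkSign {V : Type*} (G : SimpleGraph V) (σ : V → V → ℝ)
    {u v : V} (w : G.Walk u v) : ℝ :=
  (w.darts.map (fun d => σ d.toProd.1 d.toProd.2)).prod

def BalancedSG {V : Type*} (G : SimpleGraph V) (σ : V → V → ℝ) : Prop :=
  ∀ (u : V) (w : G.Walk u u), w.IsCycle → walkSign G σ w = 1

def IsMatchingF {V : Type*} (G : SimpleGraph V) (M : Finset (Sym2 V)) : Prop :=
  (∀ e ∈ M, e ∈ G.edgeSet) ∧
  ∀ e ∈ M, ∀ f ∈ M, e ≠ f → ∀ v : V, ¬(v ∈ e ∧ v ∈ f)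

noncomputable def matchingNumber {V : Type*} (G : SimpleGraph V) : ℕ :=
  sSup {k | ∃ M : Finset (Sym2 V), IsMatchingF G M ∧ M.card = k}

def MatchedIn {V : Type*} (G : SimpleGraph V) (u : V) : Prop :=
  ∀ M : Finset (Sym2 V), IsMatchingF G M → M.card = matchingNumber G → ∃ e ∈ M, u ∈ e

def MismatchedIn {V : Type*} (G : SimpleGraph V) (u : V) : Prop :=
  ∃ M : Finset (Sym2 V), IsMatchingF G M ∧ M.card = matchingNumber G ∧ ∀ e ∈ M, u ∉ e

/-!
Switching by `θ` multiplies the sign of a walk from `u` to `v` by `θ u * θ v`, so a graph switching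
equivalent to the all-positive one has every closed walk, in particular every cycle, positive.

Conversely, if every cycle is positive then so is every closed walk: the sign of a walk equals that
of its `bypass`, because each detour the bypass cuts out is a cycle or an edge traversed back and
forth. Hence walk signs depend only on the endpoints, and switching by the sign of a walk from a
fixed root of each connected component makes every edge positive.
-/

open SimpleGraph Walk

section WalkSign

variable {V : Type*} {G : SimpleGraph V} {σ : V → V → ℝ}

@[simp] lemma walkSign_nil {u : V} : walkSign G σ (nil : G.Walk u u) = 1 := rfl

@[simp] lemma walkSign_cons {u v w : V} (h : G.Adj u v) (p : G.Walk v w) :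
    walkSign G σ (cons h p) = σ u v * walkSign G σ p := by
  simp [walkSign]

@[simp] lemma walkSign_append {u v w : V} (p : G.Walk u v) (q : G.Walk v w) :
    walkSign G σ (p.append q) = walkSign G σ p * walkSign G σ q := by
  simp [walkSign, darts_append]

@[simp] lemma walkSign_copy {u v u' v' : V} (p : G.Walk u v) (hu : u = u') (hv : v = v') :
    walkSign G σ (p.copy hu hv) = walkSign G σ p := by
  subst hu hv; rfl

lemma walkSign_reverse (hsym : ∀ u v, σ u v = σ v u) {u v : V} (p : G.Walk u v) :
    walkSign G σ p.reverse = walkSign G σ p := by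
  induction p with
  | nil => rfl
  | cons h p ih => simp [reverse_cons, ih, hsym, mul_comm]

lemma walkSign_eq_one_or_neg_one (hpm : ∀ u v, G.Adj u v → σ u v = 1 ∨ σ u v = -1)
    {u v : V} (p : G.Walk u v) : walkSign G σ p = 1 ∨ walkSign G σ p = -1 := by
  induction p with
  | nil => exact Or.inl rfl
  | cons h p ih =>
    rw [walkSign_cons]
    rcases hpm _ _ h with h1 | h1 <;> rcases ih with h2 | h2 <;> simp [h1, h2]

lemma walkSign_mul_self (hpm : ∀ u v, G.Adj u v → σ u v = 1 ∨ σ u v = -1)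
    {u v : V} (p : G.Walk u v) : walkSign G σ p * walkSign G σ p = 1 := by
  rcases walkSign_eq_one_or_neg_one hpm p with h | h <;> simp [h]

lemma walkSign_eq_mul_of_forall_adj (θ : V → ℝ) (hθ : ∀ v, θ v * θ v = 1)
    (hσ : ∀ u v, G.Adj u v → σ u v = θ u * θ v) {u v : V} (p : G.Walk u v) :
    walkSign G σ p = θ u * θ v := by
  induction p with
  | nil => rw [walkSign_nil, hθ]
  | @cons a b c h q ih =>
    rw [walkSign_cons, hσ a b h, ih, mul_assoc, ← mul_assoc (θ b), hθ b, one_mul]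

end WalkSign

section Balanced

variable {V : Type*} {G : SimpleGraph V} {σ : V → V → ℝ}

lemma BalancedSG.walkSign_cons_eq_one_of_isPath (hb : BalancedSG G σ) (hsym : ∀ u v, σ u v = σ v u)
    (hpm : ∀ u v, G.Adj u v → σ u v = 1 ∨ σ u v = -1) {u v : V} (h : G.Adj u v)
    (p : G.Walk v u) (hp : p.IsPath) : walkSign G σ (cons h p) = 1 := by
  by_cases he : s(u, v) ∈ p.edges
  · rw [hp.eq_adj_toWalk_of_mem_edges (Sym2.eq_swap ▸ he)]
    simpa [hsym v u] using walkSign_mul_self hpm h.toWalk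
  · exact hb u _ ((cons_isCycle_iff p h).mpr ⟨hp, he⟩)

lemma BalancedSG.walkSign_bypass [DecidableEq V] (hb : BalancedSG G σ)
    (hsym : ∀ u v, σ u v = σ v u) (hpm : ∀ u v, G.Adj u v → σ u v = 1 ∨ σ u v = -1)
    {u v : V} (p : G.Walk u v) : walkSign G σ p.bypass = walkSign G σ p := by
  induction p with
  | nil => rfl
  | @cons u v w h p ih =>
    rw [walkSign_cons, ← ih, bypass]
    split_ifs with hs
    · have hloop := hb.walkSign_cons_eq_one_of_isPath hsym hpm h _ (p.bypass_isPath.takeUntil hs)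
      rw [walkSign_cons] at hloop
      conv_rhs => rw [← p.bypass.take_spec hs, walkSign_append, ← mul_assoc, hloop, one_mul]
    · exact walkSign_cons h _

lemma BalancedSG.walkSign_eq_one (hb : BalancedSG G σ) (hsym : ∀ u v, σ u v = σ v u)
    (hpm : ∀ u v, G.Adj u v → σ u v = 1 ∨ σ u v = -1) {u : V} (c : G.Walk u u) :
    walkSign G σ c = 1 := by
  classical
  rw [← hb.walkSign_bypass hsym hpm, (isPath_iff_nil.mp c.bypass_isPath).eq_nil, walkSign_nil]

lemma BalancedSG.walkSign_mul_mul_walkSign_eq_one (hb : BalancedSG G σ)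
    (hsym : ∀ u v, σ u v = σ v u) (hpm : ∀ u v, G.Adj u v → σ u v = 1 ∨ σ u v = -1)
    {r u v : V} (p : G.Walk r u) (h : G.Adj u v) (q : G.Walk r v) :
    walkSign G σ p * σ u v * walkSign G σ q = 1 := by
  have := hb.walkSign_eq_one hsym hpm (p.append (cons h q.reverse))
  rwa [walkSign_append, walkSign_cons, walkSign_reverse hsym, ← mul_assoc] at this

lemma BalancedSG.exists_switching (hb : BalancedSG G σ) (hsym : ∀ u v, σ u v = σ v u)
    (hpm : ∀ u v, G.Adj u v → σ u v = 1 ∨ σ u v = -1) :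
    ∃ θ : V → ℝ, (∀ v, θ v = 1 ∨ θ v = -1) ∧
      ∀ u v, G.Adj u v → θ u * σ u v * θ v = 1 := by
  let rootWalk (v : V) : G.Walk (G.connectedComponentMk v).out v :=
    (ConnectedComponent.exact (G.connectedComponentMk v).out_eq).some
  refine ⟨fun v => walkSign G σ (rootWalk v),
    fun v => walkSign_eq_one_or_neg_one hpm _, fun u v h => ?_⟩
  have hroot : (G.connectedComponentMk u).out = (G.connectedComponentMk v).out := by
    rw [ConnectedComponent.connectedComponentMk_eq_of_adj h]
  simpa using
    hb.walkSign_mul_mul_walkSign_eq_one hsym hpm ((rootWalk u).copy hroot rfl) h (rootWalk v)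

end Balanced

lemma balancedSG_of_switching {V : Type*} {G : SimpleGraph V} {σ : V → V → ℝ} {θ : V → ℝ}
    (hθ : ∀ v, θ v = 1 ∨ θ v = -1) (hsw : ∀ u v, G.Adj u v → θ u * σ u v * θ v = 1) :
    BalancedSG G σ := by
  have hθθ : ∀ v, θ v * θ v = 1 := fun v => by rcases hθ v with h | h <;> simp [h]
  have hσ : ∀ u v, G.Adj u v → σ u v = θ u * θ v := fun u v h => by
    have := hsw u v h
    rcases hθ u with hu | hu <;> rcases hθ v with hv | hv <;> simp only [hu, hv] at this ⊢ <;>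
      linarith
  intro u c _
  rw [walkSign_eq_mul_of_forall_adj θ hθθ hσ c, hθθ]

theorem stmt3_general {V : Type*}
    (G : SimpleGraph V) (σ : V → V → ℝ)
    (hsym : ∀ u v, σ u v = σ v u)
    (hpm : ∀ u v, G.Adj u v → σ u v = 1 ∨ σ u v = -1) :
    BalancedSG G σ ↔
      ∃ θ : V → ℝ, (∀ v, θ v = 1 ∨ θ v = -1) ∧
        ∀ u v, G.Adj u v → θ u * σ u v * θ v = 1 :=
  ⟨fun hb => hb.exists_switching hsym hpm, fun ⟨_, hθ, hsw⟩ => balancedSG_of_switching hθ hsw⟩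

/-- Γ = (G, σ) is balanced iff Γ is switching equivalent to (G, +). -/
theorem stmt3 {V : Type*} [Fintype V] [DecidableEq V]
    (G : SimpleGraph V) (σ : V → V → ℝ)
    (hsym : ∀ u v, σ u v = σ v u)
    (hpm : ∀ u v, G.Adj u v → σ u v = 1 ∨ σ u v = -1) :
    BalancedSG G σ ↔
      ∃ θ : V → ℝ, (∀ v, θ v = 1 ∨ θ v = -1) ∧
        ∀ u v, G.Adj u v → θ u * σ u v * θ v = 1 :=
  stmt3_general G σ hsym hpm
end

section
/- The nullity of the unbalanced signed cycle C_n is 2 if n ≡ 2 (mod 4) and 0 otherwise. -/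
open scoped Classical

/-!
If every edge sign `s i` is `±1`, the kernel equation at vertex `i + 1` reads
`x (i + 2) = -s i * s (i + 1) * x i`, so a kernel vector is determined by `x 0` and `x 1` and the
nullity is at most `2`. Iterating, `x (i + 2k) = (-1) ^ k * (product of the 2k signs passed) * x i`.
Going around the cycle (`2k = n` for even `n`, `2k = 2n` for odd `n`) this factor is
`(-1) ^ (n / 2) * ∏ s`, resp. `-(∏ s) ^ 2`; for an unbalanced cycle it is `-1` unless `n % 4 = 2`,
and then the kernel is trivial. When `n % 4 = 2`, the vectors `(-1) ^ ⌊i / 2⌋` supported on the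
even, resp. odd, vertices lie in the kernel.
-/

open Finset LinearMap Module
open scoped Matrix

namespace SignedCycle

variable {n : ℕ}

noncomputable def adj (s : ZMod n → ℝ) : Matrix (ZMod n) (ZMod n) ℝ :=
  fun i j => if j = i + 1 then s i else if i = j + 1 then s j else 0

lemma two_ne_zero_of_three_le (hn : 3 ≤ n) : (2 : ZMod n) ≠ 0 := by
  intro h
  have := Nat.le_of_dvd two_pos ((ZMod.natCast_eq_zero_iff 2 n).1 (by exact_mod_cast h))
  omega

def unbalancedSign (n : ℕ) : ZMod n → ℝ := fun i => if i = -1 then -1 else 1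

lemma unbalancedSign_sq (i : ZMod n) : unbalancedSign n i ^ 2 = 1 := by
  unfold unbalancedSign
  split_ifs <;> norm_num

variable [NeZero n]

lemma adj_mulVec_apply (hn : 3 ≤ n) (s x : ZMod n → ℝ) (i : ZMod n) :
    (adj s *ᵥ x) i = s i * x (i + 1) + s (i - 1) * x (i - 1) := by
  have hne : i + 1 ≠ i - 1 := fun h =>
    two_ne_zero_of_three_le hn (by linear_combination h)
  have hentry : ∀ j, adj s i j =
      (if j = i + 1 then s i else 0) + (if j = i - 1 then s (i - 1) else 0) := by
    intro j
    by_cases h1 : j = i + 1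
    · subst h1; simp [adj, hne]
    · by_cases h2 : j = i - 1
      · subst h2; simp [adj, h1]
      · have h3 : i ≠ j + 1 := fun h => h2 (eq_sub_of_add_eq h.symm)
        simp [adj, h1, h2, h3]
  simp only [Matrix.mulVec, dotProduct, hentry, add_mul, sum_add_distrib, ite_mul, zero_mul,
    sum_ite_eq', mem_univ, if_true]

lemma mem_ker_adj_iff (hn : 3 ≤ n) (s x : ZMod n → ℝ) :
    x ∈ ker (adj s).mulVecLin ↔ ∀ i, s i * x (i + 1) + s (i - 1) * x (i - 1) = 0 := by
  simp only [mem_ker, Matrix.mulVecLin_apply, funext_iff, Pi.zero_apply]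
  simp only [adj_mulVec_apply hn]

variable {s : ZMod n → ℝ} {x : ZMod n → ℝ}

lemma apply_add_two_of_mem_ker (hn : 3 ≤ n) (hs : ∀ i, s i ^ 2 = 1)
    (hx : x ∈ ker (adj s).mulVecLin) (i : ZMod n) :
    x (i + 2) = -(s i * s (i + 1)) * x i := by
  have h := (mem_ker_adj_iff hn s x).1 hx (i + 1)
  rw [add_assoc, one_add_one_eq_two, add_sub_cancel_right] at h
  linear_combination s (i + 1) * h - x (i + 2) * hs (i + 1)

lemma apply_add_two_mul_of_mem_ker (hn : 3 ≤ n) (hs : ∀ i, s i ^ 2 = 1)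
    (hx : x ∈ ker (adj s).mulVecLin) (i : ZMod n) (k : ℕ) :
    x (i + (2 * k : ℕ)) = (-1) ^ k * (∏ t ∈ range (2 * k), s (i + t)) * x i := by
  induction k with
  | zero => simp
  | succ k ih =>
    have hcast : ((2 * (k + 1) : ℕ) : ZMod n) = ((2 * k : ℕ) : ZMod n) + 2 := by push_cast; ring
    rw [hcast, ← add_assoc, apply_add_two_of_mem_ker hn hs hx, ih, Nat.mul_succ, prod_range_succ,
      prod_range_succ, Nat.cast_succ, ← add_assoc]
    ring

lemma eq_zero_of_mem_ker (hn : 3 ≤ n) (hs : ∀ i, s i ^ 2 = 1)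
    (hx : x ∈ ker (adj s).mulVecLin) (h0 : x 0 = 0) (h1 : x 1 = 0) : x = 0 := by
  have hnat : ∀ k : ℕ, x k = 0 ∧ x (k + 1) = 0 := by
    intro k
    induction k with
    | zero => simpa using ⟨h0, h1⟩
    | succ k ih =>
      refine ⟨by exact_mod_cast ih.2, ?_⟩
      push_cast
      rw [add_assoc, one_add_one_eq_two, apply_add_two_of_mem_ker hn hs hx, ih.1, mul_zero]
  funext i
  rw [← ZMod.natCast_zmod_val i]
  exact (hnat _).1

lemma finrank_ker_adj_le_two (hn : 3 ≤ n) (hs : ∀ i, s i ^ 2 = 1) :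
    finrank ℝ (ker (adj s).mulVecLin) ≤ 2 := by
  let values : ker (adj s).mulVecLin →ₗ[ℝ] Fin 2 → ℝ :=
    LinearMap.pi fun k => (LinearMap.proj ((k : ℕ) : ZMod n)).comp (Submodule.subtype _)
  have hinj : Function.Injective values := by
    refine (injective_iff_map_eq_zero values).2 fun x hx => Subtype.ext ?_
    exact eq_zero_of_mem_ker hn hs x.2 (by simpa [values] using congrFun hx 0)
      (by simpa [values] using congrFun hx 1)
  simpa using LinearMap.finrank_le_finrank_of_injective hinj

lemma prod_range_add_natCast {M : Type*} [CommMonoid M] (f : ZMod n → M) (i : ZMod n) :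
    ∏ t ∈ range n, f (i + t) = ∏ z, f z := by
  rw [← Fintype.prod_equiv (Equiv.addLeft i) (fun z => f (i + z)) f fun _ => rfl]
  exact prod_nbij' (fun t => (t : ZMod n)) ZMod.val (by simp) (by simp [ZMod.val_lt])
    (fun t ht => ZMod.val_cast_of_lt (mem_range.1 ht)) (fun z _ => ZMod.natCast_zmod_val z)
    (fun _ _ => rfl)

lemma ker_adj_eq_bot (hn : 3 ≤ n) (hs : ∀ i, s i ^ 2 = 1) (hunbal : ∏ z, s z = -1)
    (h4 : n % 4 ≠ 2) : ker (adj s).mulVecLin = ⊥ := by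
  refine eq_bot_iff.2 fun x hx => (Submodule.mem_bot ℝ).2 (funext fun i => ?_)
  have hcycle := prod_range_add_natCast s i
  obtain ⟨k, hk, hsign⟩ : ∃ k : ℕ, ((2 * k : ℕ) : ZMod n) = 0 ∧
      (-1) ^ k * ∏ t ∈ range (2 * k), s (i + t) = -1 := by
    rcases Nat.even_or_odd' n with ⟨m, hm | hm⟩
    · have hm_even : Even m := Nat.even_iff.2 (by omega)
      refine ⟨m, by rw [← hm, ZMod.natCast_self], ?_⟩
      rw [hm_even.neg_one_pow, one_mul, ← hm, hcycle, hunbal]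
    · have hodd : Odd n := ⟨m, hm⟩
      refine ⟨n, by simp, ?_⟩
      have hshift : ∀ t ∈ range n, s (i + ((n + t : ℕ) : ZMod n)) = s (i + t) := by
        intro t _
        simp
      rw [hodd.neg_one_pow, two_mul, prod_range_add, prod_congr rfl hshift, hcycle, hunbal]
      norm_num
  have h := apply_add_two_mul_of_mem_ker hn hs hx i k
  rw [hk, add_zero, hsign] at h
  simp only [Pi.zero_apply]
  linarith

lemma val_add_one_eq (hn : 2 ≤ n) (i : ZMod n) :
    (i + 1).val = if i.val = n - 1 then 0 else i.val + 1 := by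
  have hi := ZMod.val_lt i
  rw [ZMod.val_add, ZMod.val_one_eq_one_mod, Nat.mod_eq_of_lt (by omega : 1 < n)]
  split_ifs with h
  · rw [show i.val + 1 = n by omega, Nat.mod_self]
  · exact Nat.mod_eq_of_lt (by omega)

lemma val_sub_one_eq (hn : 2 ≤ n) (i : ZMod n) :
    (i - 1).val = if i.val = 0 then n - 1 else i.val - 1 := by
  have h := val_add_one_eq hn (i - 1)
  have hi := ZMod.val_lt (i - 1)
  rw [sub_add_cancel] at h
  split_ifs at h ⊢ <;> omega

lemma prod_unbalancedSign : ∏ z, unbalancedSign n z = -1 := by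
  simp [unbalancedSign]

lemma unbalancedSign_eq (hn : 2 ≤ n) (i : ZMod n) :
    unbalancedSign n i = if i.val = n - 1 then -1 else 1 := by
  have h : i = -1 ↔ i.val = n - 1 := by
    rw [← add_eq_zero_iff_eq_neg, ← ZMod.val_eq_zero, val_add_one_eq hn]
    split_ifs with h <;> simp [h]
  simp only [unbalancedSign, h]

noncomputable def alternating (n r : ℕ) [NeZero n] : ZMod n → ℝ :=
  fun i => if i.val % 2 = r then (-1) ^ (i.val / 2) else 0

lemma alternating_mem_ker (hn : 3 ≤ n) (h4 : n % 4 = 2) {r : ℕ} (hr : r < 2) :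
    alternating n r ∈ ker (adj (unbalancedSign n)).mulVecLin := by
  rw [mem_ker_adj_iff hn]
  intro i
  have hi := ZMod.val_lt i
  have hn2 : 2 ≤ n := by omega
  simp only [alternating, unbalancedSign_eq hn2, val_add_one_eq hn2, val_sub_one_eq hn2,
    neg_one_pow_eq_ite, Nat.even_iff]
  split_ifs <;> first | (exfalso; omega) | norm_num

lemma linearIndependent_alternating (hn : 2 ≤ n) :
    LinearIndependent ℝ ![alternating n 0, alternating n 1] := by
  rw [LinearIndependent.pair_iff]
  intro a b hab
  have hval : (1 : ZMod n).val = 1 := by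
    rw [ZMod.val_one_eq_one_mod, Nat.mod_eq_of_lt (by omega)]
  exact ⟨by simpa [alternating] using congrFun hab 0,
    by simpa [alternating, hval] using congrFun hab 1⟩

lemma finrank_ker_adj_unbalancedSign (hn : 3 ≤ n) (h4 : n % 4 = 2) :
    finrank ℝ (ker (adj (unbalancedSign n)).mulVecLin) = 2 := by
  refine le_antisymm (finrank_ker_adj_le_two hn unbalancedSign_sq) ?_
  calc 2 = finrank ℝ (Submodule.span ℝ (Set.range ![alternating n 0, alternating n 1])) := by
        rw [finrank_span_eq_card (linearIndependent_alternating (by omega)), Fintype.card_fin]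
    _ ≤ _ := by
      refine Submodule.finrank_mono (Submodule.span_le.2 ?_)
      rintro _ ⟨r, rfl⟩
      fin_cases r
      exacts [alternating_mem_ker hn h4 (by norm_num), alternating_mem_ker hn h4 (by norm_num)]

end SignedCycle

/-- the nullity of the unbalanced signed cycle Cₙ is 2 if n ≡ 2 (mod 4)
and 0 otherwise. -/
theorem stmt9 (n : ℕ) [NeZero n] (hn : 3 ≤ n)
    (A : Matrix (ZMod n) (ZMod n) ℝ)
    (hA : A = fun i j =>
      if j = i + 1 then (if i = (-1 : ZMod n) then -1 else 1)
      else if i = j + 1 then (if j = (-1 : ZMod n) then -1 else 1)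
      else 0) :
    nullity A = if n % 4 = 2 then 2 else 0 := by
  subst hA
  change finrank ℝ (ker (SignedCycle.adj (SignedCycle.unbalancedSign n)).mulVecLin) = _
  split_ifs with h4
  · exact SignedCycle.finrank_ker_adj_unbalancedSign hn h4
  · rw [SignedCycle.ker_adj_eq_bot hn SignedCycle.unbalancedSign_sq
      SignedCycle.prod_unbalancedSign h4, finrank_bot]
end

section
/- Every quasi-pendant vertex of a tree (a vertex adjacent to a vertex of degree one) is covered by every maximum matching of the tree. -/
open scoped Classical

/-! A maximum matching missing `q` also misses `p`, whose only neighbour is `q`;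
adding the edge `pq` would then give a larger matching. -/

section

variable {V : Type*} {G : SimpleGraph V}

theorem IsMatchingF.insert_edge {M : Finset (Sym2 V)} (hM : IsMatchingF G M) {a b : V}
    (hab : G.Adj a b) (ha : ∀ e ∈ M, a ∉ e) (hb : ∀ e ∈ M, b ∉ e) :
    IsMatchingF G (insert s(a, b) M) := by
  have hfree : ∀ f ∈ M, ∀ v ∈ s(a, b), v ∉ f := by
    intro f hf v hv
    rcases Sym2.mem_iff.mp hv with rfl | rfl
    exacts [ha f hf, hb f hf]
  refine ⟨Finset.forall_mem_insert _ _ _ |>.mpr ⟨hab, hM.1⟩, ?_⟩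
  intro e he f hf hef v ⟨hve, hvf⟩
  rcases Finset.mem_insert.mp he with rfl | he <;> rcases Finset.mem_insert.mp hf with rfl | hf
  · exact hef rfl
  · exact hfree f hf v hve hvf
  · exact hfree e he v hvf hve
  · exact hM.2 e he f hf hef v ⟨hve, hvf⟩

theorem IsMatchingF.card_le_matchingNumber [Finite V] {M : Finset (Sym2 V)}
    (hM : IsMatchingF G M) : M.card ≤ matchingNumber G := by
  have := Fintype.ofFinite V
  refine le_csSup ⟨Fintype.card (Sym2 V), ?_⟩ ⟨M, hM, rfl⟩
  rintro k ⟨N, -, rfl⟩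
  exact Finset.card_le_univ N

theorem SimpleGraph.edge_eq_of_neighborSet_eq_singleton {p q : V}
    (hpend : G.neighborSet p = {q}) {e : Sym2 V} (he : e ∈ G.edgeSet) (hp : p ∈ e) :
    e = s(p, q) := by
  obtain ⟨x, rfl⟩ := Sym2.mem_iff_exists.mp hp
  have hx : x ∈ G.neighborSet p := he
  rw [hpend, Set.mem_singleton_iff] at hx
  rw [hx]

end

theorem stmt12_general {V : Type*} [Fintype V]
    (G : SimpleGraph V)
    (p q : V) (hadj : G.Adj p q) (hpend : G.neighborSet p = {q}) :
    MatchedIn G q := by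
  intro M hM hcard
  by_contra! hq
  have hp : ∀ e ∈ M, p ∉ e := fun e he hpe => hq e he <|
    (G.edge_eq_of_neighborSet_eq_singleton hpend (hM.1 e he) hpe) ▸ Sym2.mem_mk_right p q
  have hpqM : s(p, q) ∉ M := fun h => hq _ h (Sym2.mem_mk_right p q)
  have hle := (hM.insert_edge hadj hp hq).card_le_matchingNumber
  rw [Finset.card_insert_of_notMem hpqM] at hle
  omega

/-- every quasi-pendant vertex of a tree is covered by every maximum
matching. -/
theorem stmt12 {V : Type*} [Fintype V] [DecidableEq V]
    (G : SimpleGraph V) (hT : G.IsTree)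
    (p q : V) (hadj : G.Adj p q) (hpend : G.neighborSet p = {q}) :
    MatchedIn G q :=
  stmt12_general G p q hadj hpend
end

section
/- A unicyclic signed graph Γ on n vertices satisfies η(Γ) = n − 2 if and only if Γ is a balanced cycle on 4 vertices. -/
open scoped Classical

/-!
If `A` has rank two and `uv` is an edge, the columns `u` and `v` span the column space, which
forces `A i j · A u v = A i u · A v j + A i v · A u j`. On the diagonal this says that `u` and `v`
have no common neighbour, and then it says that a connected `G` is the complete bipartite graph
between `N(v)` and `N(u)`, with signs `σ i j = θ i θ j` for a switching function `θ`, so `Γ` is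
balanced. Unicyclicity gives `|N(v)| · |N(u)| = |N(v)| + |N(u)|`, so both parts have two vertices.
Conversely, a balanced 4-cycle satisfies the same identity, hence has rank two.
-/

open Module Submodule Finset

namespace Matrix

variable {K V : Type*} [Field K] {A : Matrix V V K} {u v : V}

/-- `A = (cᵤ r_v + c_v rᵤ) / A u v`, where `cᵢ` and `rᵢ` are the `i`-th column and row of `A`. -/
def IsRankTwoAt (A : Matrix V V K) (u v : V) : Prop :=
  ∀ i j, A i j * A u v = A i u * A v j + A i v * A u j

lemma linearIndependent_col_pair (hu : A u u = 0) (hv : A v v = 0) (huv : A u v ≠ 0)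
    (hvu : A v u ≠ 0) : LinearIndependent K ![A.col u, A.col v] := by
  refine LinearIndependent.pair_iff.2 fun s t hst => ?_
  have hat_u := congr_fun hst u
  have hat_v := congr_fun hst v
  simp only [Pi.add_apply, Pi.smul_apply, smul_eq_mul, Pi.zero_apply, col_apply, hu, hv,
    mul_zero, zero_add, add_zero] at hat_u hat_v
  exact ⟨(mul_eq_zero.1 hat_v).resolve_right hvu, (mul_eq_zero.1 hat_u).resolve_right huv⟩

lemma IsRankTwoAt.col_eq (h : A.IsRankTwoAt u v) (huv : A u v ≠ 0) (j : V) :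
    A.col j = (A v j / A u v) • A.col u + (A u j / A u v) • A.col v := by
  ext i
  simp only [col_apply, Pi.add_apply, Pi.smul_apply, smul_eq_mul]
  field_simp
  linear_combination h i j

lemma IsRankTwoAt.apply_mul_apply_eq_zero [NeZero (2 : K)] (h : A.IsRankTwoAt u v)
    (hA : A.IsSymm) {i : V} (hi : A i i = 0) : A i u * A i v = 0 := by
  have := h i i
  rw [hi, zero_mul, hA.apply i u, hA.apply i v] at this
  have h2 : (2 : K) * (A i u * A i v) = 0 := by linear_combination -this
  exact (_root_.mul_eq_zero.1 h2).resolve_left two_ne_zero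

lemma IsRankTwoAt.ne_zero_iff [NeZero (2 : K)] (h : A.IsRankTwoAt u v) (hA : A.IsSymm)
    (hdiag : ∀ i, A i i = 0) (huv : A u v ≠ 0) (i j : V) :
    A i j ≠ 0 ↔ A i u ≠ 0 ∧ A v j ≠ 0 ∨ A i v ≠ 0 ∧ A u j ≠ 0 := by
  have hij := h i j
  rcases _root_.mul_eq_zero.1 (h.apply_mul_apply_eq_zero hA (hdiag i)) with hiu | hiv
  · rw [hiu, zero_mul, zero_add] at hij
    rw [← mul_ne_zero_iff_right huv, hij, mul_ne_zero_iff]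
    simp [hiu]
  · rw [hiv, zero_mul, add_zero] at hij
    rw [← mul_ne_zero_iff_right huv, hij, mul_ne_zero_iff]
    simp [hiv]

lemma span_col_pair_le :
    span K (Set.range ![A.col u, A.col v]) ≤ span K (Set.range A.col) := by
  refine span_mono ?_
  rintro _ ⟨i, rfl⟩
  fin_cases i <;> simp

variable [Fintype V]

lemma two_le_rank (hu : A u u = 0) (hv : A v v = 0) (huv : A u v ≠ 0) (hvu : A v u ≠ 0) :
    2 ≤ A.rank := by
  have h := finrank_span_eq_card (linearIndependent_col_pair hu hv huv hvu)
  rw [rank_eq_finrank_span_cols]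
  calc 2 = finrank K (span K (Set.range ![A.col u, A.col v])) := h.symm
    _ ≤ finrank K (span K (Set.range A.col)) := Submodule.finrank_mono span_col_pair_le

lemma IsRankTwoAt.rank_le_two (h : A.IsRankTwoAt u v) (huv : A u v ≠ 0) : A.rank ≤ 2 := by
  rw [rank_eq_finrank_span_cols]
  calc finrank K (span K (Set.range A.col))
      ≤ finrank K (span K (Set.range ![A.col u, A.col v])) := by
        refine Submodule.finrank_mono (span_le.2 ?_)
        rintro _ ⟨j, rfl⟩
        rw [h.col_eq huv j]
        exact add_mem (smul_mem _ _ (subset_span ⟨0, rfl⟩))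
          (smul_mem _ _ (subset_span ⟨1, rfl⟩))
    _ ≤ 2 := finrank_range_le_card _

lemma IsRankTwoAt.of_rank_le_two (hA : A.IsSymm) (hu : A u u = 0) (hv : A v v = 0)
    (huv : A u v ≠ 0) (hr : A.rank ≤ 2) : A.IsRankTwoAt u v := by
  have hvu : A v u ≠ 0 := by rwa [hA.apply u v]
  have hli := linearIndependent_col_pair hu hv huv hvu
  have hspan : span K (Set.range ![A.col u, A.col v]) = span K (Set.range A.col) := by
    refine eq_of_le_of_finrank_le span_col_pair_le ?_
    rw [← rank_eq_finrank_span_cols, finrank_span_eq_card hli, Fintype.card_fin]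
    exact hr
  intro i j
  obtain ⟨c, hc⟩ := (mem_span_range_iff_exists_fun K).1 (hspan ▸ subset_span ⟨j, rfl⟩ :
    A.col j ∈ span K (Set.range ![A.col u, A.col v]))
  simp only [Fin.sum_univ_two, Matrix.cons_val_zero, Matrix.cons_val_one] at hc
  have hcol : ∀ k, A k j = c 0 * A k u + c 1 * A k v := fun k => by
    simpa using (congr_fun hc k).symm
  have hju := hcol u
  have hjv := hcol v
  rw [hu] at hju
  rw [hv] at hjv
  rw [hcol i, hju, hjv, hA.apply u v]
  ring

end Matrix

lemma Nat.eq_two_of_mul_eq_add {a b : ℕ} (ha : 0 < a) (h : a * b = a + b) : a = 2 ∧ b = 2 := by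
  have hz : ((a : ℤ) - 1) * ((b : ℤ) - 1) = 1 := by
    have h' : (a : ℤ) * b = a + b := by exact_mod_cast h
    linear_combination h'
  rcases Int.eq_one_or_neg_one_of_mul_eq_one hz with h1 | h1
  · rw [h1, one_mul] at hz
    omega
  · omega

lemma Set.eq_pair_of_ncard_eq_two {α : Type*} {s : Set α} {a b : α} (hs : s.ncard = 2)
    (ha : a ∈ s) (hb : b ∈ s) (hab : a ≠ b) : s = {a, b} :=
  (Set.eq_of_subset_of_ncard_le (Set.pair_subset ha hb) (by rw [hs, Set.ncard_pair hab])
    (Set.finite_of_ncard_ne_zero (by omega))).symm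

namespace SimpleGraph

variable {V : Type*} {G : SimpleGraph V} {u v : V}

/-- `G` is the complete bipartite graph with parts `N(v) ∋ u` and `N(u) ∋ v`. -/
def IsCompleteBipartiteAt (G : SimpleGraph V) (u v : V) : Prop :=
  ∀ w, G.Adj w v ∧ G.neighborSet w = G.neighborSet u ∨
    G.Adj w u ∧ G.neighborSet w = G.neighborSet v

namespace IsCompleteBipartiteAt

lemma not_adj_and_adj (hG : G.IsCompleteBipartiteAt u v) (w : V) :
    ¬ (G.Adj w u ∧ G.Adj w v) := by
  rintro ⟨hwu, hwv⟩
  rcases hG w with ⟨-, hN⟩ | ⟨-, hN⟩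
  · exact G.irrefl (show u ∈ G.neighborSet u from hN ▸ hwu)
  · exact G.irrefl (show v ∈ G.neighborSet v from hN ▸ hwv)

lemma adj (hG : G.IsCompleteBipartiteAt u v) : G.Adj u v := by
  rcases hG u with ⟨huv, -⟩ | ⟨huu, -⟩
  · exact huv
  · exact absurd huu G.irrefl

lemma neighborSet_of_adj_right (hG : G.IsCompleteBipartiteAt u v) {w : V} (hw : G.Adj w v) :
    G.neighborSet w = G.neighborSet u :=
  ((hG w).resolve_right fun h => hG.not_adj_and_adj w ⟨h.1, hw⟩).2

lemma adj_iff (hG : G.IsCompleteBipartiteAt u v) (i j : V) :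
    G.Adj i j ↔ G.Adj i u ∧ G.Adj v j ∨ G.Adj i v ∧ G.Adj u j := by
  have hi := hG.not_adj_and_adj i
  rcases hG i with ⟨hiv, hN⟩ | ⟨hiu, hN⟩
  · rw [← mem_neighborSet, hN, mem_neighborSet]
    tauto
  · rw [← mem_neighborSet, hN, mem_neighborSet]
    tauto

lemma of_adj_iff (hconn : G.Preconnected) (huv : G.Adj u v)
    (h : ∀ i j, G.Adj i j ↔ G.Adj i u ∧ G.Adj v j ∨ G.Adj i v ∧ G.Adj u j) :
    G.IsCompleteBipartiteAt u v := by
  intro w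
  have : Nontrivial V := ⟨⟨u, v, huv.ne⟩⟩
  obtain ⟨t, hwt⟩ := hconn.exists_adj_of_nontrivial w
  have hw : ¬ (G.Adj w u ∧ G.Adj w v) := fun hw =>
    G.irrefl ((h w w).2 (Or.inl ⟨hw.1, hw.2.symm⟩))
  rcases (h w t).1 hwt with ⟨hwu, -⟩ | ⟨hwv, -⟩
  · refine Or.inr ⟨hwu, Set.ext fun j => ?_⟩
    simp only [mem_neighborSet, h w j]
    tauto
  · refine Or.inl ⟨hwv, Set.ext fun j => ?_⟩
    simp only [mem_neighborSet, h w j]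
    tauto

lemma ncard_add_ncard [Finite V] (hG : G.IsCompleteBipartiteAt u v) :
    (G.neighborSet v).ncard + (G.neighborSet u).ncard = Nat.card V := by
  have hdisj : Disjoint (G.neighborSet v) (G.neighborSet u) :=
    Set.disjoint_left.2 fun w hwv hwu => hG.not_adj_and_adj w ⟨hwu.symm, hwv.symm⟩
  have hcover : G.neighborSet v ∪ G.neighborSet u = Set.univ :=
    Set.eq_univ_of_forall fun w => (hG w).imp (fun h => h.1.symm) (fun h => h.1.symm)
  rw [← Set.ncard_union_eq hdisj, hcover, Set.ncard_univ]

lemma ncard_mul_ncard [Fintype V] (hG : G.IsCompleteBipartiteAt u v) :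
    (G.neighborSet v).ncard * (G.neighborSet u).ncard = G.edgeSet.ncard := by
  classical
  have hbip : G.IsBipartiteWith ↑(G.neighborFinset v) ↑(G.neighborFinset u) := by
    refine ⟨?_, fun i j hij => ?_⟩
    · simp only [coe_neighborFinset]
      exact Set.disjoint_left.2 fun w hwv hwu => hG.not_adj_and_adj w ⟨hwu.symm, hwv.symm⟩
    · simp only [Finset.mem_coe, mem_neighborFinset, (hG.adj_iff i j), G.adj_comm v i,
        G.adj_comm u i] at hij ⊢
      tauto
  have hdeg : ∀ w ∈ G.neighborFinset v, G.degree w = #(G.neighborFinset u) := fun w hw => by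
    rw [← card_neighborFinset_eq_degree]
    congr 1
    ext j
    rw [mem_neighborFinset, mem_neighborFinset, ← mem_neighborSet, ← mem_neighborSet,
      hG.neighborSet_of_adj_right ((mem_neighborFinset _ _ _).1 hw).symm]
  have hsum := isBipartiteWith_sum_degrees_eq_card_edges hbip
  rw [Finset.sum_congr rfl hdeg, Finset.sum_const, smul_eq_mul] at hsum
  have hN : ∀ w, (G.neighborSet w).ncard = #(G.neighborFinset w) := fun w => by
    rw [← Set.ncard_coe_finset, coe_neighborFinset]
  rw [hN, hN, hsum, ← Set.ncard_coe_finset, coe_edgeFinset]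

end IsCompleteBipartiteAt

lemma exists_isCompleteBipartiteAt_of_card_eq_four [Fintype V] (h4 : Fintype.card V = 4)
    (hdeg : ∀ v, (G.neighborSet v).ncard = 2) : ∃ u v, G.IsCompleteBipartiteAt u v := by
  obtain ⟨u⟩ : Nonempty V := Fintype.card_pos_iff.1 (by omega)
  obtain ⟨v, y, hvy, hNu⟩ := Set.ncard_eq_two.1 (hdeg u)
  have huv : G.Adj u v := show v ∈ G.neighborSet u by rw [hNu]; exact Set.mem_insert _ _
  have huy : G.Adj u y := show y ∈ G.neighborSet u by
    rw [hNu]; exact Set.mem_insert_of_mem _ rfl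
  have h3 : ({u, v, y} : Set V).ncard = 3 := by
    rw [Set.ncard_insert_of_notMem, Set.ncard_pair hvy]
    rintro (h | h)
    exacts [huv.ne h, huy.ne h]
  obtain ⟨x, hx⟩ : ∃ x, x ∉ ({u, v, y} : Set V) := by
    by_contra! h
    have := Set.ncard_le_ncard (fun w (_ : w ∈ Set.univ) => h w)
    rw [Set.ncard_univ, Nat.card_eq_fintype_card, h4, h3] at this
    omega
  have hall : ∀ w, w = x ∨ w = u ∨ w = v ∨ w = y := by
    have huniv : ({x, u, v, y} : Set V) = Set.univ := by
      refine Set.eq_of_subset_of_ncard_le (Set.subset_univ _) ?_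
      rw [Set.ncard_univ, Nat.card_eq_fintype_card, h4, Set.ncard_insert_of_notMem hx, h3]
    simpa [Set.eq_univ_iff_forall] using huniv
  simp only [Set.mem_insert_iff, Set.mem_singleton_iff, not_or] at hx
  obtain ⟨hxu, hxv, hxy⟩ := hx
  have hNx : G.neighborSet x = {v, y} := by
    refine Set.eq_of_subset_of_ncard_le (fun t ht => ?_) (by rw [hdeg, Set.ncard_pair hvy])
    rcases hall t with h | h | h | h <;> rw [h] at ht ⊢
    · exact absurd ht G.irrefl
    · have hxNu : x ∈ G.neighborSet u := G.adj_symm ht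
      rw [hNu] at hxNu
      exact absurd hxNu (by simp [hxv, hxy])
    · exact Set.mem_insert _ _
    · exact Set.mem_insert_of_mem _ rfl
  have hxv' : G.Adj x v := show v ∈ G.neighborSet x by rw [hNx]; exact Set.mem_insert _ _
  have hxy' : G.Adj x y := show y ∈ G.neighborSet x by
    rw [hNx]; exact Set.mem_insert_of_mem _ rfl
  have hNv : G.neighborSet v = {u, x} :=
    Set.eq_pair_of_ncard_eq_two (hdeg v) huv.symm hxv'.symm (Ne.symm hxu)
  have hNy : G.neighborSet y = {u, x} :=
    Set.eq_pair_of_ncard_eq_two (hdeg y) huy.symm hxy'.symm (Ne.symm hxu)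
  refine ⟨u, v, fun w => ?_⟩
  rcases hall w with rfl | rfl | rfl | rfl
  · exact Or.inl ⟨hxv', hNx.trans hNu.symm⟩
  · exact Or.inl ⟨huv, rfl⟩
  · exact Or.inr ⟨huv.symm, rfl⟩
  · exact Or.inr ⟨huy.symm, hNy.trans hNv.symm⟩

end SimpleGraph

section SignedGraph

variable {V : Type*} {G : SimpleGraph V} {σ : V → V → ℝ}

lemma mul_self_eq_one_of_adj (hpm : ∀ u v, G.Adj u v → σ u v = 1 ∨ σ u v = -1) {i j : V}
    (h : G.Adj i j) : σ i j * σ i j = 1 := by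
  rcases hpm i j h with h1 | h1 <;> norm_num [h1]

lemma walkSign_eq_of_switching {θ : V → ℝ} (hθ : ∀ a, θ a * θ a = 1)
    (hσ : ∀ a b, G.Adj a b → σ a b = θ a * θ b) {p q : V} (w : G.Walk p q) :
    walkSign G σ w = θ p * θ q := by
  induction w with
  | nil => simp [walkSign, hθ]
  | @cons a b q h w ih =>
    have hcons : walkSign G σ (.cons h w) = σ a b * walkSign G σ w := by simp [walkSign]
    rw [hcons, ih, hσ a b h]
    linear_combination θ a * θ q * hθ b

lemma balancedSG_of_switching_s17 {θ : V → ℝ} (hθ : ∀ a, θ a * θ a = 1)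
    (hσ : ∀ a b, G.Adj a b → σ a b = θ a * θ b) : BalancedSG G σ :=
  fun u w _ => (walkSign_eq_of_switching hθ hσ w).trans (hθ u)

lemma BalancedSG.mul_four_cycle (hbal : BalancedSG G σ) {a b c d : V} (hab : G.Adj a b)
    (hbc : G.Adj b c) (hcd : G.Adj c d) (hda : G.Adj d a) (hac : a ≠ c) (hbd : b ≠ d) :
    σ a b * σ b c * σ c d * σ d a = 1 := by
  have hcyc : (SimpleGraph.Walk.cons hab (.cons hbc (.cons hcd (.cons hda .nil)))).IsCycle := by
    simp [SimpleGraph.Walk.cons_isCycle_iff, SimpleGraph.Walk.cons_isPath_iff, hab.ne, hbc.ne,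
      hcd.ne, hda.ne, hab.ne.symm, hda.ne.symm, hac, hac.symm, hbd]
  have := hbal a _ hcyc
  simp only [walkSign, SimpleGraph.Walk.darts_cons, SimpleGraph.Walk.darts_nil, List.map_cons,
    List.map_nil, List.prod_cons, List.prod_nil, mul_one] at this
  linear_combination this

end SignedGraph

section SignedAdjacency

variable {V : Type*} [Fintype V] [DecidableEq V] {G : SimpleGraph V} {σ : V → V → ℝ} {u v : V}

lemma nullity_add_rank (A : Matrix V V ℝ) : nullity A + A.rank = Fintype.card V := by
  rw [nullity, Matrix.rank, add_comm, LinearMap.finrank_range_add_finrank_ker,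
    Module.finrank_fintype_fun_eq_card]

lemma sadj_of_adj {i j : V} (h : G.Adj i j) : sadj G σ i j = σ i j := if_pos h

lemma sadj_self (i : V) : sadj G σ i i = 0 := if_neg G.irrefl

lemma sadj_isSymm (hsym : ∀ u v, σ u v = σ v u) : (sadj G σ).IsSymm :=
  Matrix.IsSymm.ext fun i j => by simp only [sadj, G.adj_comm i j, hsym i j]

lemma sadj_ne_zero_iff (hpm : ∀ u v, G.Adj u v → σ u v = 1 ∨ σ u v = -1) {i j : V} :
    sadj G σ i j ≠ 0 ↔ G.Adj i j := by
  refine ⟨fun h => by_contra fun hij => h (if_neg hij), fun h => ?_⟩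
  rw [sadj_of_adj h]
  rcases hpm i j h with h1 | h1 <;> norm_num [h1]

lemma two_le_rank_sadj (hpm : ∀ u v, G.Adj u v → σ u v = 1 ∨ σ u v = -1) (huv : G.Adj u v) :
    2 ≤ (sadj G σ).rank :=
  Matrix.two_le_rank (sadj_self u) (sadj_self v) ((sadj_ne_zero_iff hpm).2 huv)
    ((sadj_ne_zero_iff hpm).2 huv.symm)

lemma isCompleteBipartiteAt_of_isRankTwoAt (hsym : ∀ u v, σ u v = σ v u)
    (hpm : ∀ u v, G.Adj u v → σ u v = 1 ∨ σ u v = -1) (hconn : G.Preconnected)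
    (huv : G.Adj u v) (hA : (sadj G σ).IsRankTwoAt u v) : G.IsCompleteBipartiteAt u v :=
  .of_adj_iff hconn huv fun i j => by
    simpa only [sadj_ne_zero_iff hpm] using
      hA.ne_zero_iff (sadj_isSymm hsym) sadj_self ((sadj_ne_zero_iff hpm).2 huv) i j

lemma exists_switching_of_isRankTwoAt (hsym : ∀ u v, σ u v = σ v u)
    (hpm : ∀ u v, G.Adj u v → σ u v = 1 ∨ σ u v = -1) (hG : G.IsCompleteBipartiteAt u v)
    (hA : (sadj G σ).IsRankTwoAt u v) :
    ∃ θ : V → ℝ, (∀ a, θ a * θ a = 1) ∧ ∀ a b, G.Adj a b → σ a b = θ a * θ b := by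
  have huv := hG.adj
  let θ : V → ℝ := fun w => if G.Adj w u then σ u w else σ u v * σ v w
  have hθ : ∀ a, θ a * θ a = 1 := fun a => by
    by_cases hau : G.Adj a u
    · simp only [θ, if_pos hau]
      exact mul_self_eq_one_of_adj hpm hau.symm
    · have hav := ((hG a).resolve_right fun h => hau h.1).1
      simp only [θ, if_neg hau]
      linear_combination σ v a * σ v a * mul_self_eq_one_of_adj hpm huv +
        mul_self_eq_one_of_adj hpm hav.symm
  have hedge : ∀ a b, G.Adj a u → G.Adj v b → σ a b = θ a * θ b := fun a b hau hbv => by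
    have hbu : ¬ G.Adj b u := fun hbu => hG.not_adj_and_adj b ⟨hbu, hbv.symm⟩
    have hav : ¬ G.Adj a v := fun hav => hG.not_adj_and_adj a ⟨hau, hav⟩
    have hab := hA a b
    simp only [sadj, if_pos ((hG.adj_iff a b).2 (.inl ⟨hau, hbv⟩)), if_pos huv, if_pos hau,
      if_pos hbv, if_neg hav, zero_mul, add_zero] at hab
    simp only [θ, if_pos hau, if_neg hbu]
    linear_combination σ u v * hab - σ a b * mul_self_eq_one_of_adj hpm huv
      + σ u v * σ v b * hsym a u
  refine ⟨θ, hθ, fun a b hab => ?_⟩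
  rcases (hG.adj_iff a b).1 hab with ⟨hau, hvb⟩ | ⟨hav, hub⟩
  · exact hedge a b hau hvb
  · rw [hsym, hedge b a hub.symm hav.symm, mul_comm]

lemma isRankTwoAt_of_balancedSG (hsym : ∀ u v, σ u v = σ v u)
    (hpm : ∀ u v, G.Adj u v → σ u v = 1 ∨ σ u v = -1) (hG : G.IsCompleteBipartiteAt u v)
    (hbal : BalancedSG G σ) : (sadj G σ).IsRankTwoAt u v := by
  have huv := hG.adj
  have hcycle : ∀ i j, G.Adj i u → G.Adj v j → σ i j * σ u v = σ i u * σ v j := by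
    intro i j hiu hvj
    obtain rfl | hiv := eq_or_ne i v
    · rw [hsym u i, mul_comm]
    obtain rfl | hju := eq_or_ne j u
    · rw [hsym j v]
    have hji : G.Adj j i := (hG.adj_iff j i).2 (.inr ⟨hvj.symm, hiu.symm⟩)
    have h4 := hbal.mul_four_cycle huv hvj hji hiu hju.symm hiv.symm
    rw [hsym j i] at h4
    linear_combination σ v j * σ i u * h4 - σ u v * σ i j * σ i u * σ i u *
      mul_self_eq_one_of_adj hpm hvj - σ u v * σ i j * mul_self_eq_one_of_adj hpm hiu
  intro i j
  have hterm : ∀ a b c d, sadj G σ a b * sadj G σ c d ≠ 0 → G.Adj a b ∧ G.Adj c d :=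
    fun a b c d h => ⟨(sadj_ne_zero_iff hpm).1 (left_ne_zero_of_mul h),
      (sadj_ne_zero_iff hpm).1 (right_ne_zero_of_mul h)⟩
  by_cases hij : G.Adj i j
  · rcases (hG.adj_iff i j).1 hij with ⟨hiu, hvj⟩ | ⟨hiv, huj⟩
    · have hiv : ¬ G.Adj i v := fun hiv => hG.not_adj_and_adj i ⟨hiu, hiv⟩
      simp only [sadj, if_pos hij, if_pos huv, if_pos hiu, if_pos hvj, if_neg hiv, zero_mul,
        add_zero]
      exact hcycle i j hiu hvj
    · have hiu : ¬ G.Adj i u := fun hiu => hG.not_adj_and_adj i ⟨hiu, hiv⟩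
      simp only [sadj, if_pos hij, if_pos huv, if_pos hiv, if_pos huj, if_neg hiu, zero_mul,
        zero_add]
      rw [hsym i j, hsym i v, hsym u j, mul_comm (σ v i)]
      exact hcycle j i huj.symm hiv.symm
  · have h1 : sadj G σ i u * sadj G σ v j = 0 := by_contra fun h =>
      hij ((hG.adj_iff i j).2 (.inl (hterm _ _ _ _ h)))
    have h2 : sadj G σ i v * sadj G σ u j = 0 := by_contra fun h =>
      hij ((hG.adj_iff i j).2 (.inr (hterm _ _ _ _ h)))
    rw [h1, h2, add_zero, show sadj G σ i j = 0 from if_neg hij, zero_mul]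

end SignedAdjacency

/-- a unicyclic signed graph Γ on n vertices has η(Γ) = n − 2 iff Γ is a
balanced cycle on 4 vertices. -/
theorem stmt17 {V : Type*} [Fintype V] [DecidableEq V]
    (G : SimpleGraph V) (σ : V → V → ℝ)
    (hconn : G.Connected) (huni : G.edgeSet.ncard = Fintype.card V)
    (hsym : ∀ u v, σ u v = σ v u)
    (hpm : ∀ u v, G.Adj u v → σ u v = 1 ∨ σ u v = -1) :
    nullity (sadj G σ) = Fintype.card V - 2 ↔
      (Fintype.card V = 4 ∧ (∀ v, (G.neighborSet v).ncard = 2) ∧ BalancedSG G σ) := by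
  have hrank := nullity_add_rank (sadj G σ)
  constructor
  · intro hnull
    have := hconn.nonempty
    have hE : G.edgeSet.Nonempty :=
      Set.nonempty_of_ncard_ne_zero (by rw [huni]; exact Fintype.card_ne_zero)
    obtain ⟨u, v, huv⟩ := G.ne_bot_iff_exists_adj.1 (G.edgeSet_nonempty.1 hE)
    have h2 := two_le_rank_sadj hpm huv
    have hA : (sadj G σ).IsRankTwoAt u v :=
      .of_rank_le_two (sadj_isSymm hsym) (sadj_self u) (sadj_self v)
        ((sadj_ne_zero_iff hpm).2 huv) (by omega)
    have hG := isCompleteBipartiteAt_of_isRankTwoAt hsym hpm hconn.preconnected huv hA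
    obtain ⟨hv2, hu2⟩ := Nat.eq_two_of_mul_eq_add
      ((Set.ncard_pos (s := G.neighborSet v)).2 ⟨u, huv.symm⟩)
      (by rw [hG.ncard_mul_ncard, hG.ncard_add_ncard, huni, Nat.card_eq_fintype_card])
    obtain ⟨θ, hθ, hσ⟩ := exists_switching_of_isRankTwoAt hsym hpm hG hA
    refine ⟨?_, fun w => ?_, balancedSG_of_switching_s17 hθ hσ⟩
    · rw [← Nat.card_eq_fintype_card, ← hG.ncard_add_ncard, hv2, hu2]
    · rcases hG w with ⟨-, hN⟩ | ⟨-, hN⟩ <;> rw [hN]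
      exacts [hu2, hv2]
  · rintro ⟨h4, hdeg, hbal⟩
    obtain ⟨u, v, hG⟩ := SimpleGraph.exists_isCompleteBipartiteAt_of_card_eq_four h4 hdeg
    have h2 := two_le_rank_sadj hpm hG.adj
    have h2' := (isRankTwoAt_of_balancedSG hsym hpm hG hbal).rank_le_two
      ((sadj_ne_zero_iff hpm).2 hG.adj)
    omega
end
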